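/- arXiv:2004.13353 — 3 statements merged into one kernel-verified Lean document; each statement's English description precedes it below -/
import Mathlib

section
/- Let r > 0 and let G : [0, x∞] → [r, ∞) be continuous, decreasing, with G(x∞) = r. Let Q(u) = u ln u − u + 1. For any t > 0 and any absolutely continuous trajectory x : [0,t] → ℝ₊ with x(0) = x∞, x(t) = η ∈ (0, x∞), and −r·x_s ≤ ẋ_s ≤ 0 a.e., one has ∫₀ᵗ x_s · Q( (ẋ_s + r x_s)/(G(x_s) x_s) ) ds ≥ (1/r)·∫_η^{x∞} Q(r/G(y)) dy. -/
/-!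
Since `ẋ ≤ 0`, the trajectory decreases from `x∞` to `η`, so `G(x_s) ≥ r` and the argument
`u_s = (ẋ_s + r x_s)/(G(x_s) x_s)` of `Q` lies in `[0, r/G(x_s)] ⊆ [0, 1]`, where `Q` decreases.
Hence pointwise `x_s Q(u_s) ≥ x_s Q(r/G(x_s)) ≥ -(ẋ_s/r) Q(r/G(x_s))`, and the integral of the
last expression over `[0, t]` is `(1/r) ∫_η^{x∞} Q(r/G(y)) dy` by the substitution `y = x_s`.
The substitution is valid for absolutely continuous `x`: a primitive of `Q(r/G)` is Lipschitz,
so its composition with `x` is absolutely continuous and obeys the fundamental theorem of calculus.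
-/

open Real MeasureTheory Set Filter InformationTheory
open scoped NNReal

lemma antitoneOn_klFun : AntitoneOn klFun (Icc 0 1) := by
  refine antitoneOn_of_deriv_nonpos (convex_Icc 0 1) continuous_klFun.continuousOn ?_ ?_
  · rw [interior_Icc]
    exact fun u hu => (hasDerivAt_klFun hu.1.ne').differentiableAt.differentiableWithinAt
  · rw [interior_Icc, deriv_klFun]
    exact fun u hu => log_nonpos hu.1.le hu.2.le

lemma klFun_le_one {u : ℝ} (hu : u ∈ Icc (0 : ℝ) 1) : klFun u ≤ 1 :=
  klFun_zero ▸ antitoneOn_klFun (left_mem_Icc.2 zero_le_one) hu hu.1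

lemma norm_mul_klFun_le {y u : ℝ} (hy : 0 ≤ y) (hu : u ∈ Icc (0 : ℝ) 1) :
    ‖y * klFun u‖ ≤ y := by
  rw [norm_of_nonneg (mul_nonneg hy (klFun_nonneg hu.1))]
  exact mul_le_of_le_one_right hy (klFun_le_one hu)

lemma add_mul_div_mul_mem_Icc {r c y v : ℝ} (hr : 0 < r) (hrc : r ≤ c) (hy : 0 < y)
    (hv₁ : -r * y ≤ v) (hv₀ : v ≤ 0) : (v + r * y) / (c * y) ∈ Icc 0 (r / c) := by
  have hc : 0 < c := hr.trans_le hrc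
  refine ⟨div_nonneg (by linarith) (by positivity), ?_⟩
  rw [div_le_div_iff₀ (by positivity) hc]
  nlinarith

lemma neg_div_mul_klFun_le {r c y v : ℝ} (hr : 0 < r) (hrc : r ≤ c) (hy : 0 < y)
    (hv₁ : -r * y ≤ v) (hv₀ : v ≤ 0) :
    -v / r * klFun (r / c) ≤ y * klFun ((v + r * y) / (c * y)) := by
  have hu := add_mul_div_mul_mem_Icc hr hrc hy hv₁ hv₀
  have hrc1 : r / c ∈ Icc (0 : ℝ) 1 :=
    ⟨hu.1.trans hu.2, div_le_one_of_le₀ hrc (hr.trans_le hrc).le⟩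
  calc -v / r * klFun (r / c) ≤ y * klFun (r / c) := by
        gcongr
        · exact klFun_nonneg hrc1.1
        · rw [div_le_iff₀ hr]; linarith
    _ ≤ y * klFun ((v + r * y) / (c * y)) := by
        gcongr
        exact antitoneOn_klFun ⟨hu.1, hu.2.trans hrc1.2⟩ hrc1 hu.2

theorem LipschitzOnWith.comp_absolutelyContinuousOnInterval {X Y : Type*} [PseudoMetricSpace X]
    [PseudoMetricSpace Y] {Φ : X → Y} {K : ℝ≥0} {s : Set X} {f : ℝ → X} {a b : ℝ}
    (hΦ : LipschitzOnWith K Φ s) (hf : AbsolutelyContinuousOnInterval f a b)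
    (hfs : MapsTo f (uIcc a b) s) : AbsolutelyContinuousOnInterval (Φ ∘ f) a b := by
  have hK := mul_zero (K : ℝ) ▸ Tendsto.const_mul (K : ℝ) hf
  refine squeeze_zero' (Eventually.of_forall fun E => Finset.sum_nonneg fun _ _ => dist_nonneg)
    ?_ hK
  filter_upwards [mem_inf_of_right (mem_principal_self _)] with E hE
  rw [Finset.mul_sum]
  exact Finset.sum_le_sum fun i hi =>
    hΦ.dist_le_mul _ (hfs (hE.1 i hi).1) _ (hfs (hE.1 i hi).2)

theorem AbsolutelyContinuousOnInterval.integral_comp_mul_deriv {f f' g : ℝ → ℝ} {a b m M : ℝ}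
    (hf : AbsolutelyContinuousOnInterval f a b)
    (hf' : ∀ᵐ s, s ∈ uIcc a b → HasDerivAt f (f' s) s)
    (hfmM : MapsTo f (uIcc a b) (Icc m M)) (hg : ContinuousOn g (Icc m M)) :
    ∫ s in a..b, g (f s) * f' s = ∫ y in f a..f b, g y := by
  have hmM : m ≤ M := (hfmM left_mem_uIcc).1.trans (hfmM left_mem_uIcc).2
  set g₁ := IccExtend hmM ((Icc m M).domRestrict g)
  have hg₁ : Continuous g₁ := (continuousOn_iff_continuous_domRestrict.1 hg).Icc_extend'
  have hg₁g : EqOn g₁ g (Icc m M) := fun y hy => IccExtend_of_mem hmM _ hy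
  set Φ := fun y => ∫ z in f a..y, g₁ z
  have hΦ (y : ℝ) : HasDerivAt Φ (g₁ y) y := (hg₁.integral_hasStrictDerivAt (f a) y).hasDerivAt
  have hΦC1 : ContDiff ℝ 1 Φ := contDiff_one_iff_deriv.2
    ⟨fun y => (hΦ y).differentiableAt, by simpa [funext fun y => (hΦ y).deriv] using hg₁⟩
  obtain ⟨K, hK⟩ := hΦC1.contDiffOn.exists_lipschitzOnWith one_ne_zero (convex_Icc m M)
    isCompact_Icc
  calc ∫ s in a..b, g (f s) * f' s = ∫ s in a..b, deriv (Φ ∘ f) s := by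
        refine intervalIntegral.integral_congr_ae ?_
        filter_upwards [hf'] with s hs hsab
        have hsab' := uIoc_subset_uIcc hsab
        rw [((hΦ (f s)).comp s (hs hsab')).deriv, hg₁g (hfmM hsab')]
    _ = Φ (f b) - Φ (f a) :=
        (hK.comp_absolutelyContinuousOnInterval hf hfmM).integral_deriv_eq_sub
    _ = ∫ y in f a..f b, g y := by
        simp only [Φ, intervalIntegral.integral_same, sub_zero]
        refine intervalIntegral.integral_congr fun y hy => hg₁g ?_
        exact uIcc_subset_Icc (hfmM left_mem_uIcc) (hfmM right_mem_uIcc) hy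

section Primitive

variable {x x' : ℝ → ℝ} {a b x₀ : ℝ}

theorem antitoneOn_of_eq_add_integral (hx' : IntervalIntegrable x' volume a b)
    (hx : ∀ s ∈ Icc a b, x s = x₀ + ∫ u in a..s, x' u)
    (hneg : ∀ᵐ s, s ∈ Icc a b → x' s ≤ 0) : AntitoneOn x (Icc a b) := by
  intro s hs s' hs' hss'
  have hint : ∀ c ∈ Icc a b, ∀ d ∈ Icc a b, IntervalIntegrable x' volume c d := fun c hc d hd =>
    hx'.mono_set (uIcc_subset_uIcc (mem_uIcc_of_le hc.1 hc.2) (mem_uIcc_of_le hd.1 hd.2))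
  have ha : a ∈ Icc a b := left_mem_Icc.2 (hs.1.trans hs.2)
  have hle : 0 ≤ ∫ u in s..s', -x' u := by
    refine intervalIntegral.integral_nonneg_of_ae_restrict hss' ?_
    filter_upwards [ae_restrict_of_ae hneg, ae_restrict_mem measurableSet_Icc] with u hu hu'
    exact neg_nonneg.2 (hu ⟨hs.1.trans hu'.1, hu'.2.trans hs'.2⟩)
  rw [intervalIntegral.integral_neg] at hle
  rw [hx s hs, hx s' hs', ← intervalIntegral.integral_add_adjacent_intervals (hint a ha s hs)
    (hint s hs s' hs')]
  linarith

theorem continuousOn_of_eq_add_integral (hab : a ≤ b) (hx' : IntervalIntegrable x' volume a b)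
    (hx : ∀ s ∈ Icc a b, x s = x₀ + ∫ u in a..s, x' u) :
    ContinuousOn x (Icc a b) := by
  rw [← uIcc_of_le hab] at hx ⊢
  exact (continuousOn_const.add (intervalIntegral.continuousOn_primitive_interval' hx'
    left_mem_uIcc)).congr hx

theorem integral_comp_mul_deriv_of_eq_add_integral {g : ℝ → ℝ} {m M : ℝ} (hab : a ≤ b)
    (hx' : IntervalIntegrable x' volume a b) (hx : ∀ s ∈ Icc a b, x s = x₀ + ∫ u in a..s, x' u)
    (hxmM : MapsTo x (Icc a b) (Icc m M)) (hg : ContinuousOn g (Icc m M)) :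
    ∫ s in a..b, g (x s) * x' s = ∫ y in x a..x b, g y := by
  set X := fun s => x₀ + ∫ u in a..s, x' u
  have hXx : EqOn X x (uIcc a b) := by
    rw [uIcc_of_le hab]
    exact fun s hs => (hx s hs).symm
  have hX : AbsolutelyContinuousOnInterval X a b :=
    (LipschitzWith.const x₀).lipschitzOnWith.absolutelyContinuousOnInterval.fun_add
      (hx'.absolutelyContinuousOnInterval_intervalIntegral left_mem_uIcc)
  have hX' : ∀ᵐ s, s ∈ uIcc a b → HasDerivAt X (x' s) s := by
    filter_upwards [hx'.ae_hasDerivAt_integral] with s hs hsab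
    exact (hs hsab a left_mem_uIcc).const_add x₀
  have hXmM : MapsTo X (uIcc a b) (Icc m M) := fun s hs =>
    hXx hs ▸ hxmM (by rwa [← uIcc_of_le hab])
  calc ∫ s in a..b, g (x s) * x' s = ∫ s in a..b, g (X s) * x' s :=
        intervalIntegral.integral_congr fun s hs => by rw [hXx hs]
    _ = ∫ y in X a..X b, g y := hX.integral_comp_mul_deriv hX' hXmM hg
    _ = ∫ y in x a..x b, g y := by rw [hXx left_mem_uIcc, hXx right_mem_uIcc]

end Primitive

theorem intervalIntegrable_mul_klFun_add_mul_div_mul {x x' c : ℝ → ℝ} {a b r : ℝ} (hab : a ≤ b)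
    (hr : 0 < r) (hx : ContinuousOn x (Icc a b)) (hxpos : ∀ s ∈ Icc a b, 0 < x s)
    (hc : ContinuousOn c (Icc a b)) (hrc : ∀ s ∈ Icc a b, r ≤ c s)
    (hx' : IntervalIntegrable x' volume a b)
    (hx'bd : ∀ᵐ s, s ∈ Icc a b → -r * x s ≤ x' s ∧ x' s ≤ 0) :
    IntervalIntegrable (fun s => x s * klFun ((x' s + r * x s) / (c s * x s))) volume a b := by
  rw [intervalIntegrable_iff_integrableOn_Ioc_of_le hab]
  obtain ⟨C, hC⟩ := isCompact_Icc.exists_bound_of_continuousOn hx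
  have hxm := (hx.mono Ioc_subset_Icc_self).aemeasurable (μ := volume) measurableSet_Ioc
  have hcm := (hc.mono Ioc_subset_Icc_self).aemeasurable (μ := volume) measurableSet_Ioc
  have hx'm := ((intervalIntegrable_iff_integrableOn_Ioc_of_le hab).1 hx').1.aemeasurable
  refine IntegrableOn.of_bound measure_Ioc_lt_top (hxm.mul (measurable_klFun.comp_aemeasurable
    ((hx'm.add (hxm.const_mul r)).div (hcm.mul hxm)))).aestronglyMeasurable C ?_
  filter_upwards [ae_restrict_of_ae hx'bd, ae_restrict_mem measurableSet_Ioc] with s hs hsab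
  have hsab := Ioc_subset_Icc_self hsab
  have hu := add_mul_div_mul_mem_Icc hr (hrc s hsab) (hxpos s hsab) (hs hsab).1 (hs hsab).2
  have hrc1 : r / c s ≤ 1 := div_le_one_of_le₀ (hrc s hsab) (hr.le.trans (hrc s hsab))
  exact (norm_mul_klFun_le (hxpos s hsab).le ⟨hu.1, hu.2.trans hrc1⟩).trans
    ((le_norm_self _).trans (hC s hsab))

theorem ldp_cost_lower_bound_general (r xInf η t : ℝ) (hr : 0 < r) (hη : 0 < η)
    (ht : 0 < t)
    (G Q x x' : ℝ → ℝ)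
    (hQ : ∀ u, Q u = u * Real.log u - u + 1)
    (hGcont : ContinuousOn G (Set.Icc 0 xInf))
    (hGr : ∀ y ∈ Set.Icc (0 : ℝ) xInf, r ≤ G y)
    (hx'int : IntervalIntegrable x' MeasureTheory.volume 0 t)
    (hAC : ∀ s ∈ Set.Icc (0 : ℝ) t, x s = xInf + ∫ u in (0 : ℝ)..s, x' u)
    (hx0 : x 0 = xInf) (hxt : x t = η)
    (hderiv : ∀ᵐ s ∂MeasureTheory.volume,
      s ∈ Set.Icc (0 : ℝ) t → -r * x s ≤ x' s ∧ x' s ≤ 0) :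
    (∫ s in (0 : ℝ)..t, x s * Q ((x' s + r * x s) / (G (x s) * x s))) ≥
      (1 / r) * ∫ y in η..xInf, Q (r / G y) := by
  obtain rfl : Q = klFun := funext fun u => by rw [hQ, klFun_apply]; ring
  have hxmem : MapsTo x (Icc 0 t) (Icc η xInf) := hx0 ▸ hxt ▸ (antitoneOn_of_eq_add_integral
    hx'int hAC (by filter_upwards [hderiv] with s hs hst using (hs hst).2)).mapsTo_Icc
  have hxpos : ∀ s ∈ Icc 0 t, 0 < x s := fun s hs => hη.trans_le (hxmem hs).1
  have hGmem : MapsTo G (Icc η xInf) (Ici r) := fun y hy => hGr y ⟨hη.le.trans hy.1, hy.2⟩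
  have hGc : ContinuousOn G (Icc η xInf) := hGcont.mono (Icc_subset_Icc_left hη.le)
  have hψ : ContinuousOn (fun y => klFun (r / G y)) (Icc η xInf) :=
    continuous_klFun.comp_continuousOn <|
      continuousOn_const.div hGc fun y hy => (hr.trans_le (hGmem hy)).ne'
  have hxc := continuousOn_of_eq_add_integral ht.le hx'int hAC
  have hsubst : ∫ y in η..xInf, klFun (r / G y) =
      ∫ s in (0 : ℝ)..t, klFun (r / G (x s)) * -x' s := by
    rw [← hx0, ← hxt, intervalIntegral.integral_symm,
      ← integral_comp_mul_deriv_of_eq_add_integral ht.le hx'int hAC hxmem hψ,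
      ← intervalIntegral.integral_neg]
    simp only [mul_neg]
  rw [ge_iff_le, hsubst, ← intervalIntegral.integral_const_mul]
  refine intervalIntegral.integral_mono_ae_restrict ht.le ?_
    (intervalIntegrable_mul_klFun_add_mul_div_mul ht.le hr hxc hxpos (hGc.comp hxc hxmem)
      (fun s hs => hGmem (hxmem hs)) hx'int hderiv) ?_
  · refine (hx'int.neg.continuousOn_mul ?_).const_mul (1 / r)
    rw [uIcc_of_le ht.le]
    exact hψ.comp hxc hxmem
  · filter_upwards [ae_restrict_of_ae hderiv, ae_restrict_mem measurableSet_Icc] with s hs hst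
    exact le_of_eq_of_le (by ring)
      (neg_div_mul_klFun_le hr (hGmem (hxmem hst)) (hxpos s hst) (hs hst).1 (hs hst).2)

/-- Lower bound on the large deviation cost of a downward trajectory.
If `x` is absolutely continuous on `[0,t]` with a.e. derivative `x'`
satisfying `−r·x_s ≤ x'_s ≤ 0`, `x(0) = x∞`, `x(t) = η ∈ (0,x∞)`, and `G` is
continuous, antitone on `[0,x∞]` with values `≥ r` and `G(x∞) = r`, then
`∫₀ᵗ x_s·Q((x'_s + r x_s)/(G(x_s)·x_s)) ds ≥ (1/r)·∫_η^{x∞} Q(r/G(y)) dy`,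
where `Q(u) = u·ln u − u + 1`. -/
theorem ldp_cost_lower_bound (r xInf η t : ℝ) (hr : 0 < r) (hη : 0 < η)
    (hηx : η < xInf) (ht : 0 < t)
    (G Q x x' : ℝ → ℝ)
    (hQ : ∀ u, Q u = u * Real.log u - u + 1)
    (hGcont : ContinuousOn G (Set.Icc 0 xInf))
    (hGanti : AntitoneOn G (Set.Icc 0 xInf))
    (hGr : ∀ y ∈ Set.Icc (0 : ℝ) xInf, r ≤ G y)
    (hGx : G xInf = r)
    (hx'int : IntervalIntegrable x' MeasureTheory.volume 0 t)
    (hAC : ∀ s ∈ Set.Icc (0 : ℝ) t, x s = xInf + ∫ u in (0 : ℝ)..s, x' u)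
    (hx0 : x 0 = xInf) (hxt : x t = η)
    (hxpos : ∀ s ∈ Set.Icc (0 : ℝ) t, 0 ≤ x s)
    (hderiv : ∀ᵐ s ∂MeasureTheory.volume,
      s ∈ Set.Icc (0 : ℝ) t → -r * x s ≤ x' s ∧ x' s ≤ 0) :
    (∫ s in (0 : ℝ)..t, x s * Q ((x' s + r * x s) / (G (x s) * x s))) ≥
      (1 / r) * ∫ y in η..xInf, Q (r / G y) :=
  ldp_cost_lower_bound_general r xInf η t hr hη ht G Q x x' hQ hGcont hGr hx'int hAC hx0 hxt hderiv
end

section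
/- Let f : [0,∞) → [0,1] be non-increasing with f(s₀) = e^{−s₀} for some s₀ > 0, and suppose f(t+s) ≥ f(t)·(f(s) − ε) for all s, t ≥ 0, where ε ∈ [0,1). If f(s₀/k) ≥ ε for an integer k ≥ 1, then f(s₀/k) ≤ ε + e^{−s₀/k}. -/
open Real

theorem pow_sub_le_apply_natCast_mul {f : ℝ → ℝ} {ε x : ℝ} (hε : 0 ≤ ε)
    (hsuper : ∀ t s : ℝ, 0 ≤ t → 0 ≤ s → f (t + s) ≥ f t * (f s - ε))
    (hx : 0 ≤ x) (hfx : ε ≤ f x) {n : ℕ} (hn : 1 ≤ n) :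
    (f x - ε) ^ n ≤ f (n * x) := by
  induction n, hn using Nat.le_induction with
  | base => simpa using hε
  | succ n hn ih =>
    calc (f x - ε) ^ (n + 1) = (f x - ε) ^ n * (f x - ε) := pow_succ _ _
      _ ≤ f (n * x) * (f x - ε) := mul_le_mul_of_nonneg_right ih (sub_nonneg.mpr hfx)
      _ ≤ f (n * x + x) := hsuper _ _ (by positivity) hx
      _ = f ((n + 1 : ℕ) * x) := by push_cast; ring_nf

theorem iterated_supermultiplicativity_general
    (f : ℝ → ℝ) (s₀ ε : ℝ) (hs₀ : 0 < s₀) (hε0 : 0 ≤ ε)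
    (hfs₀ : f s₀ = Real.exp (-s₀))
    (hsuper : ∀ t s : ℝ, 0 ≤ t → 0 ≤ s → f (t + s) ≥ f t * (f s - ε)) :
    ∀ k : ℕ, 1 ≤ k → ε ≤ f (s₀ / k) →
      f (s₀ / k) ≤ ε + Real.exp (-(s₀ / k)) := by
  intro k hk hεf
  have hk0 : (k : ℝ) ≠ 0 := by positivity
  have hpow : (f (s₀ / k) - ε) ^ k ≤ Real.exp (-(s₀ / k)) ^ k :=
    calc (f (s₀ / k) - ε) ^ k ≤ f (k * (s₀ / k)) :=
          pow_sub_le_apply_natCast_mul hε0 hsuper (by positivity) hεf hk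
      _ = Real.exp (-(s₀ / k)) ^ k := by
          rw [mul_div_cancel₀ _ hk0, hfs₀, ← Real.exp_nat_mul]
          field_simp
  linarith [le_of_pow_le_pow_left₀ (by omega) (Real.exp_nonneg _) hpow]

/-- Iterated super-multiplicativity: if `f : [0,∞) → [0,1]` is non-increasing
with `f(s₀) = e^{−s₀}` for some `s₀ > 0`, and `f(t+s) ≥ f(t)·(f(s)−ε)` for all
`s,t ≥ 0` with `ε ∈ [0,1)`, then for any integer `k ≥ 1` with `f(s₀/k) ≥ ε` we
have `f(s₀/k) ≤ ε + e^{−s₀/k}`. -/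
theorem iterated_supermultiplicativity
    (f : ℝ → ℝ) (s₀ ε : ℝ) (hs₀ : 0 < s₀) (hε0 : 0 ≤ ε) (hε1 : ε < 1)
    (hrange : ∀ t, 0 ≤ t → f t ∈ Set.Icc (0 : ℝ) 1)
    (hmono : AntitoneOn f (Set.Ici 0))
    (hfs₀ : f s₀ = Real.exp (-s₀))
    (hsuper : ∀ t s : ℝ, 0 ≤ t → 0 ≤ s → f (t + s) ≥ f t * (f s - ε)) :
    ∀ k : ℕ, 1 ≤ k → ε ≤ f (s₀ / k) →
      f (s₀ / k) ≤ ε + Real.exp (-(s₀ / k)) :=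
  iterated_supermultiplicativity_general f s₀ ε hs₀ hε0 hfs₀ hsuper
end

section
/- Let κ ∈ (0,1), t₀ > 0, ν > 0 with ν·t₀·e^{ν t₀} < 1, and let f : [0,∞) → [0,∞) satisfy f(t) ≤ ν·∫_{(t−t₀)₊}^t f(s) ds for all t ≥ t₀, and f(t) ≤ A for all t ∈ [0, t₀] for some A ≥ f(0). Then for every integer n ≥ 1 and all t ∈ [n t₀, (n+1) t₀), f(t) ≤ (ν t₀ e^{ν t₀})^n · A; in particular f decays geometrically: f(t) ≤ ((ν t₀ e^{ν t₀})^{1/t₀})^t · A / (ν t₀ e^{ν t₀}) for t ≥ t₀. -/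
open Real MeasureTheory
open Set

lemma delayed_gronwall_step
    (f : ℝ → ℝ) (ν t₀ B w : ℝ) (hν : 0 < ν) (ht₀ : 0 < t₀) (hB : 0 ≤ B)
    (hwt : t₀ ≤ w)
    (hfnn : ∀ t, 0 ≤ t → 0 ≤ f t)
    (hprev : ∀ s ∈ Set.Ico (w - t₀) w, f s ≤ B)
    (hrec : ∀ t, t₀ ≤ t → f t ≤ ν * ∫ s in (t - t₀)..t, f s)
    (t : ℝ) (ht1 : w ≤ t) (ht2 : t < w + t₀) :
    f t ≤ ν * t₀ * Real.exp (ν * t₀) * B := by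
  have hw0 : 0 < w := lt_of_lt_of_le ht₀ hwt
  have htarget : 0 ≤ ν * t₀ * Real.exp (ν * t₀) * B := by positivity
  by_cases hI : IntervalIntegrable f volume (t - t₀) t
  swap
  · have := hrec t (by linarith)
    rw [intervalIntegral.integral_undef hI] at this
    linarith
  -- f is indicator-integrable on (w, t]
  have hsub : IntervalIntegrable f volume w t := by
    apply hI.mono_set
    rw [Set.uIcc_of_le (by linarith), Set.uIcc_of_le (by linarith)]
    exact Set.Icc_subset_Icc (by linarith) le_rfl
  have hIOn : IntegrableOn f (Set.Ioc w t) := hsub.1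
  set f1 : ℝ → ℝ := (Set.Ioc w t).indicator f with hf1def
  have hf1 : Integrable f1 := hIOn.integrable_indicator measurableSet_Ioc
  have hf1nn : ∀ u, 0 ≤ f1 u := by
    intro u
    apply Set.indicator_nonneg
    intro x hx
    have hx1 : w < x := hx.1
    exact hfnn x (by linarith)
  set F : ℝ → ℝ := fun s => ∫ u in w..s, f1 u with hFdef
  have hFcont : Continuous F := hf1.continuous_primitive w
  have hFnn : ∀ s, w ≤ s → 0 ≤ F s := fun s hs =>
    intervalIntegral.integral_nonneg hs (fun u _ => hf1nn u)
  have hFeq : ∀ s, w ≤ s → s ≤ t → F s = ∫ u in w..s, f u := by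
    intro s hs hst
    rw [hFdef]
    simp only
    rw [intervalIntegral.integral_of_le hs, intervalIntegral.integral_of_le hs]
    apply setIntegral_congr_fun measurableSet_Ioc
    intro u hu
    have hmem : u ∈ Set.Ioc w t := ⟨hu.1, hu.2.trans hst⟩
    exact Set.indicator_of_mem hmem f
  set a : ℝ := ν * (t₀ * B) with hadef
  have ha0 : 0 ≤ a := by positivity
  -- key pointwise inequality
  have hkey : ∀ s, w ≤ s → s ≤ t → f s ≤ a + ν * F s := by
    intro s hs hst
    have hs0 : t₀ ≤ s := le_trans hwt hs
    have hfs := hrec s hs0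
    by_cases hI' : IntervalIntegrable f volume (s - t₀) s
    swap
    · rw [intervalIntegral.integral_undef hI'] at hfs
      have := hFnn s hs
      nlinarith
    · have hsubs : ∀ c d : ℝ, s - t₀ ≤ c → c ≤ d → d ≤ s →
          IntervalIntegrable f volume c d := by
        intro c d h1 h2 h3
        apply hI'.mono_set
        rw [Set.uIcc_of_le h2, Set.uIcc_of_le (by linarith)]
        exact Set.Icc_subset_Icc h1 h3
      have h1 : IntervalIntegrable f volume (s - t₀) (t - t₀) :=
        hsubs _ _ le_rfl (by linarith) (by linarith)
      have h2 : IntervalIntegrable f volume (t - t₀) w :=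
        hsubs _ _ (by linarith) (by linarith) (by linarith)
      have h3 : IntervalIntegrable f volume w s :=
        hsubs _ _ (by linarith) hs le_rfl
      have hsplit : (∫ u in (s - t₀)..s, f u)
          = (∫ u in (s - t₀)..(t - t₀), f u) + (∫ u in (t - t₀)..w, f u)
            + (∫ u in w..s, f u) := by
        rw [add_assoc, intervalIntegral.integral_add_adjacent_intervals h2 h3,
          intervalIntegral.integral_add_adjacent_intervals h1 (h2.trans h3)]
      have hb1 : (∫ u in (s - t₀)..(t - t₀), f u) ≤ ((t - t₀) - (s - t₀)) * B := by
        have := intervalIntegral.integral_mono_on (by linarith) h1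
          (intervalIntegrable_const (c := B))
          (fun x hx => hprev x ⟨by linarith [hx.1], by linarith [hx.2]⟩)
        simpa [smul_eq_mul] using this
      have hb2 : (∫ u in (t - t₀)..w, f u) ≤ (w - (t - t₀)) * B := by
        have hane : ∀ᵐ x : ℝ, x ≠ w := by
          rw [ae_iff]
          convert Real.volume_singleton (a := w)
          ext x; simp
        have hae : f ≤ᵐ[volume.restrict (Set.Icc (t - t₀) w)] fun _ => B := by
          refine (ae_restrict_iff' measurableSet_Icc).2 ?_
          filter_upwards [hane] with x hx hmem
          exact hprev x ⟨by linarith [hmem.1], lt_of_le_of_ne hmem.2 hx⟩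
        have := intervalIntegral.integral_mono_ae_restrict (by linarith) h2
          (intervalIntegrable_const (c := B)) hae
        simpa [smul_eq_mul] using this
      have hb3 : (∫ u in w..s, f u) = F s := (hFeq s hs hst).symm
      have hsum : (∫ u in (s - t₀)..s, f u) ≤ t₀ * B + F s := by
        rw [hsplit, hb3]
        nlinarith
      calc f s ≤ ν * ∫ u in (s - t₀)..s, f u := hfs
        _ ≤ ν * (t₀ * B + F s) := by nlinarith
        _ = a + ν * F s := by rw [hadef]; ring
  -- Gronwall on H
  set g : ℝ → ℝ := fun u => a + ν * F u with hgdef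
  have hgcont : Continuous g := continuous_const.add (continuous_const.mul hFcont)
  set H : ℝ → ℝ := fun s => ∫ u in w..s, g u with hHdef
  have hH' : ∀ x : ℝ, HasDerivAt H (g x) x := by
    intro x
    exact intervalIntegral.integral_hasDerivAt_right (hgcont.intervalIntegrable _ _)
      (hgcont.stronglyMeasurableAtFilter _ _) hgcont.continuousAt
  have hHcont : Continuous H := by
    apply continuous_iff_continuousAt.2
    exact fun x => (hH' x).continuousAt
  have hgnn : ∀ u, w ≤ u → 0 ≤ g u := by
    intro u hu
    have := hFnn u hu
    rw [hgdef]; simp only; nlinarith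
  have hHnn : ∀ s, w ≤ s → 0 ≤ H s := fun s hs =>
    intervalIntegral.integral_nonneg hs (fun u hu => hgnn u hu.1)
  have hFH : ∀ s ∈ Set.Icc w t, F s ≤ H s := by
    intro s hs
    apply intervalIntegral.integral_mono_on hs.1 (hf1.intervalIntegrable)
      (hgcont.intervalIntegrable _ _)
    intro u hu
    by_cases hmem : u ∈ Set.Ioc w t
    · rw [hf1def]
      simp only [Set.indicator_of_mem hmem]
      exact hkey u hmem.1.le hmem.2
    · rw [hf1def]
      simp only [Set.indicator_of_notMem hmem]
      exact hgnn u hu.1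
  have hgron := norm_le_gronwallBound_of_norm_deriv_right_le (f := H) (f' := g)
    (δ := 0) (K := ν) (ε := a) (a := w) (b := t)
    hHcont.continuousOn (fun x _ => (hH' x).hasDerivWithinAt)
    (by simp [hHdef])
    (by
      intro x hx
      have hx1 : w ≤ x := hx.1
      have hFx := hFH x ⟨hx.1, hx.2.le⟩
      have h1 : ‖g x‖ = g x := by
        rw [Real.norm_eq_abs, abs_of_nonneg (hgnn x hx1)]
      have h2 : ‖H x‖ = H x := by
        rw [Real.norm_eq_abs, abs_of_nonneg (hHnn x hx1)]
      rw [h1, h2, hgdef]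
      simp only
      nlinarith)
  have hHt := hgron t ⟨ht1, le_rfl⟩
  rw [Real.norm_eq_abs, abs_of_nonneg (hHnn t ht1),
    gronwallBound_of_K_ne_0 hν.ne'] at hHt
  simp only [zero_mul, zero_add] at hHt
  have hFt : F t ≤ H t := hFH t ⟨ht1, le_rfl⟩
  have hexp : Real.exp (ν * (t - w)) ≤ Real.exp (ν * t₀) :=
    Real.exp_le_exp.2 (by nlinarith)
  have hft := hkey t ht1 le_rfl
  have hνF : ν * F t ≤ a * (Real.exp (ν * (t - w)) - 1) := by
    have : ν * F t ≤ ν * H t := by nlinarith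
    calc ν * F t ≤ ν * H t := this
      _ ≤ ν * (a / ν * (Real.exp (ν * (t - w)) - 1)) := by nlinarith
      _ = a * (Real.exp (ν * (t - w)) - 1) := by field_simp
  have hexp1 : (1 : ℝ) ≤ Real.exp (ν * (t - w)) := by
    rw [← Real.exp_zero]
    exact Real.exp_le_exp.2 (by nlinarith)
  calc f t ≤ a + ν * F t := hft
    _ ≤ a + a * (Real.exp (ν * (t - w)) - 1) := by linarith
    _ = a * Real.exp (ν * (t - w)) := by ring
    _ ≤ a * Real.exp (ν * t₀) := by nlinarith
    _ = ν * t₀ * Real.exp (ν * t₀) * B := by rw [hadef]; ring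

/-- Delayed Gronwall inequality with geometric decay: if `f ≥ 0` satisfies
`f(t) ≤ ν·∫_{t−t₀}^t f` for `t ≥ t₀`, `f ≤ A` on `[0,t₀]` with `A ≥ f(0)`, and
`ν t₀ e^{ν t₀} < 1`, then `f(t) ≤ (ν t₀ e^{ν t₀})^n·A` on `[n t₀, (n+1)t₀)`,
hence `f(t) ≤ ((ν t₀ e^{ν t₀})^{1/t₀})^t · A/(ν t₀ e^{ν t₀})` for `t ≥ t₀`. -/
theorem delayed_gronwall_geometric_decay
    (f : ℝ → ℝ) (ν t₀ A : ℝ) (hν : 0 < ν) (ht₀ : 0 < t₀)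
    (hκ : ν * t₀ * Real.exp (ν * t₀) < 1)
    (hfnn : ∀ t, 0 ≤ t → 0 ≤ f t)
    (hA : f 0 ≤ A)
    (hbdd : ∀ t ∈ Set.Icc (0 : ℝ) t₀, f t ≤ A)
    (hrec : ∀ t, t₀ ≤ t → f t ≤ ν * ∫ s in (t - t₀)..t, f s) :
    (∀ n : ℕ, 1 ≤ n → ∀ t, (n : ℝ) * t₀ ≤ t → t < ((n : ℝ) + 1) * t₀ →
        f t ≤ (ν * t₀ * Real.exp (ν * t₀)) ^ n * A) ∧
      ∀ t, t₀ ≤ t →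
        f t ≤ (ν * t₀ * Real.exp (ν * t₀)) ^ (t / t₀) * A /
            (ν * t₀ * Real.exp (ν * t₀)) := by
  set C : ℝ := ν * t₀ * Real.exp (ν * t₀) with hCdef
  have hC0 : 0 < C := by positivity
  have hA0 : 0 ≤ A := le_trans (hfnn 0 le_rfl) hA
  have P : ∀ n : ℕ, ∀ t, (n : ℝ) * t₀ ≤ t → t < ((n : ℝ) + 1) * t₀ → f t ≤ C ^ n * A := by
    intro n
    induction n with
    | zero =>
      intro t h1 h2
      push_cast at h1 h2
      simpa using hbdd t ⟨by linarith, by linarith⟩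
    | succ n ih =>
      intro t h1 h2
      push_cast at h1 h2
      have hstep := delayed_gronwall_step f ν t₀ (C ^ n * A) (((n : ℝ) + 1) * t₀)
        hν ht₀ (by positivity) (by nlinarith [Nat.cast_nonneg (α := ℝ) n]) hfnn
        (fun s hs => ih s (by have := hs.1; linarith) (by have := hs.2; linarith))
        hrec t (by linarith) (by linarith)
      calc f t ≤ ν * t₀ * Real.exp (ν * t₀) * (C ^ n * A) := hstep
        _ = C ^ (n + 1) * A := by rw [pow_succ, hCdef]; ring
  refine ⟨fun n _ t h1 h2 => P n t h1 h2, ?_⟩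
  intro t ht
  have ht0 : 0 < t := lt_of_lt_of_le ht₀ ht
  set n : ℕ := ⌊t / t₀⌋₊ with hndef
  have hnle : (n : ℝ) ≤ t / t₀ := Nat.floor_le (by positivity)
  have hnlt : t / t₀ < (n : ℝ) + 1 := Nat.lt_floor_add_one _
  have hdiv1 : 1 ≤ t / t₀ := (one_le_div ht₀).2 ht
  have hb1 : (n : ℝ) * t₀ ≤ t := (le_div_iff₀ ht₀).1 hnle
  have hb2 : t < ((n : ℝ) + 1) * t₀ := (div_lt_iff₀ ht₀).1 hnlt
  have hft := P n t hb1 hb2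
  have hrpow : C ^ (t / t₀) * A / C = C ^ (t / t₀ - 1) * A := by
    rw [Real.rpow_sub hC0, Real.rpow_one]; ring
  have hmono : C ^ ((n : ℝ)) ≤ C ^ (t / t₀ - 1) :=
    Real.rpow_le_rpow_of_exponent_ge hC0 hκ.le (by linarith)
  rw [Real.rpow_natCast] at hmono
  rw [hrpow]
  calc f t ≤ C ^ n * A := hft
    _ ≤ C ^ (t / t₀ - 1) * A := mul_le_mul_of_nonneg_right hmono hA0
end
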